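/- arXiv:math/0312442 — 5 statements merged into one kernel-verified Lean document; each statement's English description precedes it below -/
import Mathlib

section
/- Let 𝒜 be an abelian category and (x₀, …, x_{r−1}) a linearly independent system of additive functions on the Grothendieck group K₀(𝒜) with the positivity property: for every object A, x₀(A) ≥ 0; if x₀(A) = 0 then x₁(A) ≥ 0; …; and if x₀(A) = ⋯ = x_{r−2}(A) = 0 then x_{r−1}(A) > 0. Then the preorder on nonzero objects defined by comparing the associated slope vectors lexicographically satisfies the seesaw property: for any short exact sequence 0 → A → B → C → 0 of nonzero objects, A ≺ B iff B ≺ C, A ≍ B iff B ≍ C, and A ≻ B iff B ≻ C. -/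
open CategoryTheory Category Limits
universe v u

noncomputable section

/-- `ν(a/b)`: `(1/π) arcctg (a/b)` when `b > 0`, and `1` when `b = 0`. -/
def nuRatio (a b : ℝ) : ℝ :=
  if 0 < b then (Real.pi / 2 - Real.arctan (a / b)) / Real.pi else 1

section RealAux

open Real

lemma nuRatio_eq {a b : ℝ} (hb : 0 < b) :
    nuRatio a b = (π / 2 - arctan (a / b)) / π := if_pos hb

lemma nuRatio_lt_one {a b : ℝ} (hb : 0 < b) : nuRatio a b < 1 := by
  rw [nuRatio_eq hb, div_lt_one Real.pi_pos]
  have := Real.neg_pi_div_two_lt_arctan (a / b)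
  linarith


lemma nuRatio_neg_eq {u b : ℝ} (hb : 0 < b) :
    nuRatio (-u) b = (π / 2 + arctan (u / b)) / π := by
  rw [nuRatio_eq hb, neg_div, Real.arctan_neg]
  ring

lemma nuRatio_lt_iff {u v b b' : ℝ} (hb : 0 < b) (hb' : 0 < b') :
    nuRatio (-u) b < nuRatio (-v) b' ↔ u / b < v / b' := by
  rw [nuRatio_neg_eq hb, nuRatio_neg_eq hb', div_lt_div_iff_of_pos_right Real.pi_pos,
    add_lt_add_iff_left, Real.arctan_strictMono.lt_iff_lt]

lemma nuRatio_eq_iff {u v b b' : ℝ} (hb : 0 < b) (hb' : 0 < b') :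
    nuRatio (-u) b = nuRatio (-v) b' ↔ u / b = v / b' := by
  rcases lt_trichotomy (u / b) (v / b') with hh | hh | hh
  · simp only [hh.ne, iff_false]
    exact ((nuRatio_lt_iff hb hb').mpr hh).ne
  · simp only [hh, iff_true]
    rw [nuRatio_neg_eq hb, nuRatio_neg_eq hb', hh]
  · simp only [hh.ne', iff_false]
    exact ((nuRatio_lt_iff hb' hb).mpr hh).ne'

/-- Positivity condition on a vector of values. -/
def Pq {r : ℕ} (f : Fin r → ℝ) : Prop :=
  ∀ i : Fin r, (∀ j : Fin r, j < i → f j = 0) → 0 ≤ f i ∧ (i.val = r - 1 → 0 < f i)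

/-- Pure-vector version of `slopeVec`. -/
def svec {r : ℕ} (f : Fin r → ℝ) : Fin r → ℝ := fun i =>
  if h : ∃ j, f j ≠ 0 then
    let s : Fin r := (Finset.univ.filter fun j => f j ≠ 0).min'
      (by obtain ⟨j, hj⟩ := h; exact ⟨j, Finset.mem_filter.mpr ⟨Finset.mem_univ _, hj⟩⟩)
    if i ≤ s then 1 else nuRatio (-(f i)) (f s)
  else 1

lemma Pq.exists_ne {r : ℕ} {f : Fin r → ℝ} (hf : Pq f) (hr : 0 < r) :
    ∃ j, f j ≠ 0 := by
  by_contra h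
  push_neg at h
  have := (hf ⟨r - 1, by omega⟩ (fun j _ => h j)).2 rfl
  rw [h _] at this
  exact lt_irrefl _ this

/-- The first index where `f` is nonzero. -/
def sIdx {r : ℕ} (f : Fin r → ℝ) (h : ∃ j, f j ≠ 0) : Fin r :=
  (Finset.univ.filter fun j => f j ≠ 0).min'
    (by obtain ⟨j, hj⟩ := h; exact ⟨j, Finset.mem_filter.mpr ⟨Finset.mem_univ _, hj⟩⟩)

lemma sIdx_mem {r : ℕ} (f : Fin r → ℝ) (h : ∃ j, f j ≠ 0) :
    sIdx f h ∈ Finset.univ.filter fun j => f j ≠ 0 :=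
  Finset.min'_mem _ _

lemma sIdx_ne {r : ℕ} (f : Fin r → ℝ) (h : ∃ j, f j ≠ 0) : f (sIdx f h) ≠ 0 :=
  (Finset.mem_filter.mp (sIdx_mem f h)).2

lemma sIdx_zero {r : ℕ} (f : Fin r → ℝ) (h : ∃ j, f j ≠ 0) {j : Fin r}
    (hj : j < sIdx f h) : f j = 0 := by
  by_contra hne
  exact absurd (Finset.min'_le _ j (Finset.mem_filter.mpr ⟨Finset.mem_univ _, hne⟩))
    (not_le_of_gt hj)

lemma sIdx_eq {r : ℕ} (f : Fin r → ℝ) (h : ∃ j, f j ≠ 0) {s : Fin r}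
    (hs : f s ≠ 0) (h0 : ∀ j, j < s → f j = 0) : sIdx f h = s := by
  refine le_antisymm (Finset.min'_le _ s (Finset.mem_filter.mpr ⟨Finset.mem_univ _, hs⟩))
    (le_of_not_gt fun hlt => ?_)
  exact sIdx_ne f h (h0 _ hlt)

lemma svec_apply {r : ℕ} (f : Fin r → ℝ) (h : ∃ j, f j ≠ 0) (i : Fin r) :
    svec f i = if i ≤ sIdx f h then 1 else nuRatio (-(f i)) (f (sIdx f h)) := by
  simp only [svec]
  rw [dif_pos h]
  rfl

lemma svec_apply' {r : ℕ} (f : Fin r → ℝ) (h : ∃ j, f j ≠ 0) {s : Fin r}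
    (hs : sIdx f h = s) (i : Fin r) :
    svec f i = if i ≤ s then 1 else nuRatio (-(f i)) (f s) := by
  rw [svec_apply f h, hs]

lemma szero' {r : ℕ} (f : Fin r → ℝ) (h : ∃ j, f j ≠ 0) {s : Fin r}
    (hs : sIdx f h = s) {j : Fin r} (hj : j < s) : f j = 0 :=
  sIdx_zero f h (by rw [hs]; exact hj)

lemma Pq.sIdx_pos {r : ℕ} {f : Fin r → ℝ} (hf : Pq f) (h : ∃ j, f j ≠ 0) :
    0 < f (sIdx f h) :=
  lt_of_le_of_ne ((hf _ (fun _ hj => sIdx_zero f h hj)).1) (Ne.symm (sIdx_ne f h))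

/-- Transfer of strict lexicographic inequalities along pointwise implications. -/
lemma lex_mono {r : ℕ} {u v u' v' : Fin r → ℝ}
    (hlt : ∀ i, u i < v i → u' i < v' i) (heq : ∀ i, u i = v i → u' i = v' i) :
    toLex u < toLex v → toLex u' < toLex v' := by
  rintro ⟨i, hj, hi⟩
  exact ⟨i, fun j hjlt => heq j (hj j hjlt), hlt i hi⟩

lemma lex_transfer {r : ℕ} {u v w : Fin r → ℝ}
    (hlt : ∀ i, (u i < v i ↔ v i < w i)) (heq : ∀ i, (u i = v i ↔ v i = w i)) :
    (toLex u < toLex v ↔ toLex v < toLex w) ∧ (u = v ↔ v = w) ∧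
      (toLex v < toLex u ↔ toLex w < toLex v) := by
  have hgt : ∀ i, (v i < u i ↔ w i < v i) := by
    intro i
    constructor
    · intro h
      rcases lt_trichotomy (w i) (v i) with h' | h' | h'
      · exact h'
      · exact absurd ((heq i).mpr h'.symm) (ne_of_gt h)
      · exact absurd ((hlt i).mpr h') (not_lt_of_gt h)
    · intro h
      rcases lt_trichotomy (v i) (u i) with h' | h' | h'
      · exact h'
      · exact absurd ((heq i).mp h'.symm) (ne_of_gt h)
      · exact absurd ((hlt i).mp h') (not_lt_of_gt h)
  refine ⟨⟨lex_mono (fun i => (hlt i).mp) (fun i => (heq i).mp),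
    lex_mono (fun i => (hlt i).mpr) (fun i => (heq i).mpr)⟩, ?_,
    ⟨lex_mono (fun i => (hgt i).mp) (fun i e => ((heq i).mp e.symm).symm),
     lex_mono (fun i => (hgt i).mpr) (fun i e => ((heq i).mpr e.symm).symm)⟩⟩
  constructor
  · intro e; funext i; exact (heq i).mp (congrFun e i)
  · intro e; funext i; exact (heq i).mpr (congrFun e i)

lemma core {r : ℕ} (a c : Fin r → ℝ) (ha : Pq a) (hc : Pq c) :
    (toLex (svec a) < toLex (svec (a + c)) ↔ toLex (svec (a + c)) < toLex (svec c)) ∧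
    (svec a = svec (a + c) ↔ svec (a + c) = svec c) ∧
    (toLex (svec (a + c)) < toLex (svec a) ↔ toLex (svec c) < toLex (svec (a + c))) := by
  rcases Nat.eq_zero_or_pos r with rfl | hr
  · have e1 : svec (a + c) = svec a := funext fun i => i.elim0
    have e2 : svec c = svec a := funext fun i => i.elim0
    rw [e1, e2]
    exact ⟨Iff.rfl, Iff.rfl, Iff.rfl⟩
  have hA : ∃ j, a j ≠ 0 := ha.exists_ne hr
  have hC : ∃ j, c j ≠ 0 := hc.exists_ne hr
  obtain ⟨sA, hsA⟩ : ∃ s, sIdx a hA = s := ⟨_, rfl⟩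
  obtain ⟨sC, hsC⟩ : ∃ s, sIdx c hC = s := ⟨_, rfl⟩
  have aS : 0 < a sA := hsA ▸ ha.sIdx_pos hA
  have cS : 0 < c sC := hsC ▸ hc.sIdx_pos hC
  have haz : ∀ j : Fin r, j < sA → a j = 0 := fun j hj => szero' a hA hsA hj
  have hcz : ∀ j : Fin r, j < sC → c j = 0 := fun j hj => szero' c hC hsC hj
  rcases lt_trichotomy sA sC with hlt | heqs | hgt
  · -- sA < sC : A < B and B < C
    have hcsA : c sA = 0 := hcz sA hlt
    have hB : ∃ j, (a + c) j ≠ 0 := ⟨sA, by simp [hcsA, ne_of_gt aS]⟩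
    have hsB : sIdx (a + c) hB = sA := by
      refine sIdx_eq _ hB (by simp [hcsA, ne_of_gt aS]) fun j hj => ?_
      simp [haz j hj, hcz j (hj.trans hlt)]
    have LAB : toLex (svec a) < toLex (svec (a + c)) := by
      refine ⟨sC, fun j hj => ?_, ?_⟩
      · have hj' : j < sC := hj
        show svec a j = svec (a + c) j
        rw [svec_apply' a hA hsA, svec_apply' (a + c) hB hsB]
        by_cases hjs : j ≤ sA
        · simp [hjs]
        · simp [hjs, hcz j hj', hcsA]
      · show svec a sC < svec (a + c) sC
        rw [svec_apply' a hA hsA, svec_apply' (a + c) hB hsB,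
          if_neg (not_le_of_gt hlt), if_neg (not_le_of_gt hlt)]
        simp only [Pi.add_apply, hcsA, add_zero]
        rw [nuRatio_lt_iff aS aS, div_lt_div_iff_of_pos_right aS]
        linarith
    have LBC : toLex (svec (a + c)) < toLex (svec c) := by
      have hlts : (sA : ℕ) < (sC : ℕ) := hlt
      have hi : (sA : ℕ) + 1 < r := lt_of_le_of_lt (Nat.succ_le_of_lt hlts) sC.isLt
      refine ⟨⟨(sA : ℕ) + 1, hi⟩, fun j hj => ?_, ?_⟩
      · have hjv : (j : ℕ) < (sA : ℕ) + 1 := hj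
        have hjA : j ≤ sA := Fin.le_def.mpr (by omega)
        show svec (a + c) j = svec c j
        rw [svec_apply' (a + c) hB hsB, svec_apply' c hC hsC,
          if_pos hjA, if_pos (hjA.trans hlt.le)]
      · show svec (a + c) ⟨(sA : ℕ) + 1, hi⟩ < svec c ⟨(sA : ℕ) + 1, hi⟩
        rw [svec_apply' (a + c) hB hsB, svec_apply' c hC hsC,
          if_neg (by rw [Fin.le_def]; simp), if_pos (Fin.le_def.mpr (by simpa using hlts))]
        have hb' : (0:ℝ) < (a + c) sA := by simp [hcsA, aS]
        exact nuRatio_lt_one hb'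
    refine ⟨⟨fun _ => LBC, fun _ => LAB⟩, ?_, ?_⟩
    · constructor <;> intro e
      · rw [e] at LAB; exact absurd LAB (lt_irrefl _)
      · rw [e] at LBC; exact absurd LBC (lt_irrefl _)
    · constructor <;> intro e
      · exact absurd LAB (lt_asymm e)
      · exact absurd LBC (lt_asymm e)
  · -- sA = sC : mediant case
    subst heqs
    have cS' : 0 < c sA := cS
    have bS : 0 < (a + c) sA := by simp only [Pi.add_apply]; linarith
    have hB : ∃ j, (a + c) j ≠ 0 := ⟨sA, ne_of_gt bS⟩
    have hsB : sIdx (a + c) hB = sA := by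
      refine sIdx_eq _ hB (ne_of_gt bS) fun j hj => ?_
      simp [haz j hj, hcz j hj]
    have key : ∀ i, (svec a i < svec (a + c) i ↔ svec (a + c) i < svec c i) ∧
        (svec a i = svec (a + c) i ↔ svec (a + c) i = svec c i) := by
      intro i
      rw [svec_apply' a hA hsA, svec_apply' (a + c) hB hsB, svec_apply' c hC hsC]
      by_cases his : i ≤ sA
      · simp [his]
      · rw [if_neg his, if_neg his, if_neg his]
        constructor
        · rw [nuRatio_lt_iff aS bS, nuRatio_lt_iff bS cS',
            div_lt_div_iff₀ aS bS, div_lt_div_iff₀ bS cS']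
          simp only [Pi.add_apply]
          constructor <;> intro h <;> nlinarith
        · rw [nuRatio_eq_iff aS bS, nuRatio_eq_iff bS cS',
            div_eq_div_iff (ne_of_gt aS) (ne_of_gt bS),
            div_eq_div_iff (ne_of_gt bS) (ne_of_gt cS')]
          simp only [Pi.add_apply]
          constructor <;> intro h <;> nlinarith
    exact lex_transfer (fun i => (key i).1) (fun i => (key i).2)
  · -- sC < sA : B < A and C < B
    have hasC : a sC = 0 := haz sC hgt
    have hB : ∃ j, (a + c) j ≠ 0 := ⟨sC, by simp [hasC, ne_of_gt cS]⟩
    have hsB : sIdx (a + c) hB = sC := by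
      refine sIdx_eq _ hB (by simp [hasC, ne_of_gt cS]) fun j hj => ?_
      simp [hcz j hj, haz j (hj.trans hgt)]
    have aSA : 0 < a sA := aS
    have LCB : toLex (svec c) < toLex (svec (a + c)) := by
      refine ⟨sA, fun j hj => ?_, ?_⟩
      · have hj' : j < sA := hj
        show svec c j = svec (a + c) j
        rw [svec_apply' c hC hsC, svec_apply' (a + c) hB hsB]
        by_cases hjs : j ≤ sC
        · simp [hjs]
        · simp [hjs, haz j hj', hasC]
      · show svec c sA < svec (a + c) sA
        rw [svec_apply' c hC hsC, svec_apply' (a + c) hB hsB,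
          if_neg (not_le_of_gt hgt), if_neg (not_le_of_gt hgt)]
        simp only [Pi.add_apply, hasC, add_zero, zero_add]
        rw [nuRatio_lt_iff cS cS, div_lt_div_iff_of_pos_right cS]
        linarith
    have LBA : toLex (svec (a + c)) < toLex (svec a) := by
      have hgts : (sC : ℕ) < (sA : ℕ) := hgt
      have hi : (sC : ℕ) + 1 < r := lt_of_le_of_lt (Nat.succ_le_of_lt hgts) sA.isLt
      refine ⟨⟨(sC : ℕ) + 1, hi⟩, fun j hj => ?_, ?_⟩
      · have hjv : (j : ℕ) < (sC : ℕ) + 1 := hj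
        have hjC : j ≤ sC := Fin.le_def.mpr (by omega)
        show svec (a + c) j = svec a j
        rw [svec_apply' (a + c) hB hsB, svec_apply' a hA hsA,
          if_pos hjC, if_pos (hjC.trans hgt.le)]
      · show svec (a + c) ⟨(sC : ℕ) + 1, hi⟩ < svec a ⟨(sC : ℕ) + 1, hi⟩
        rw [svec_apply' (a + c) hB hsB, svec_apply' a hA hsA,
          if_neg (by rw [Fin.le_def]; simp), if_pos (Fin.le_def.mpr (by simpa using hgts))]
        have hb' : (0:ℝ) < (a + c) sC := by simp [hasC, cS]
        exact nuRatio_lt_one hb'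
    refine ⟨?_, ?_, ⟨fun _ => LCB, fun _ => LBA⟩⟩
    · constructor <;> intro e
      · exact absurd LBA (lt_asymm e)
      · exact absurd LCB (lt_asymm e)
    · constructor <;> intro e
      · rw [e] at LBA; exact absurd LBA (lt_irrefl _)
      · rw [e] at LCB; exact absurd LCB (lt_irrefl _)

end RealAux

variable {C : Type u} [Category.{v} C] [Abelian C]

/-- The slope vector of an object `A` determined by the system of additive functions
`x`: it is `(1, …, 1, ν(−x_{s+1}(A)/x_s(A)), …, ν(−x_{r-1}(A)/x_s(A)))` where `s` is the
first index with `x_s(A) ≠ 0` (and the constant vector `1` if all `x_i(A) = 0`). -/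
def slopeVec {r : ℕ} (x : Fin r → C → ℝ) (A : C) : Fin r → ℝ := fun i =>
  if h : ∃ j, x j A ≠ 0 then
    let s : Fin r := (Finset.univ.filter fun j => x j A ≠ 0).min'
      (by obtain ⟨j, hj⟩ := h; exact ⟨j, Finset.mem_filter.mpr ⟨Finset.mem_univ _, hj⟩⟩)
    if i ≤ s then 1 else nuRatio (-(x i A)) (x s A)
  else 1

/-- The preorder on nonzero objects given by the lexicographic comparison of slope vectors
associated to a positive linearly independent system of additive functions on `K₀`
satisfies the seesaw property. -/
theorem slope_preorder_seesaw {r : ℕ} (x : Fin r → C → ℝ)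
    (hadd : ∀ (i : Fin r) (S : ShortComplex C), S.ShortExact →
      x i S.X₂ = x i S.X₁ + x i S.X₃)
    (hindep : LinearIndependent ℝ x)
    (hpos : ∀ A : C, ¬ IsZero A → ∀ i : Fin r, (∀ j : Fin r, j < i → x j A = 0) →
      (0 ≤ x i A ∧ (i.val = r - 1 → 0 < x i A)))
    (S : ShortComplex C) (hS : S.ShortExact)
    (h₁ : ¬ IsZero S.X₁) (h₂ : ¬ IsZero S.X₂) (h₃ : ¬ IsZero S.X₃) :
    (toLex (slopeVec x S.X₁) < toLex (slopeVec x S.X₂) ↔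
      toLex (slopeVec x S.X₂) < toLex (slopeVec x S.X₃)) ∧
    (slopeVec x S.X₁ = slopeVec x S.X₂ ↔ slopeVec x S.X₂ = slopeVec x S.X₃) ∧
    (toLex (slopeVec x S.X₂) < toLex (slopeVec x S.X₁) ↔
      toLex (slopeVec x S.X₃) < toLex (slopeVec x S.X₂)) := by
  have hb : (fun i => x i S.X₂) = (fun i => x i S.X₁) + (fun i => x i S.X₃) :=
    funext fun i => hadd i S hS
  have e1 : slopeVec x S.X₁ = svec (fun i => x i S.X₁) := rfl
  have e2 : slopeVec x S.X₂ = svec ((fun i => x i S.X₁) + (fun i => x i S.X₃)) := by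
    rw [show slopeVec x S.X₂ = svec (fun i => x i S.X₂) from rfl, hb]
  have e3 : slopeVec x S.X₃ = svec (fun i => x i S.X₃) := rfl
  rw [e1, e2, e3]
  exact core _ _ (hpos S.X₁ h₁) (hpos S.X₃ h₃)

end
end

section
/- Let (Φ, {Π_φ}) be a t-stability on a triangulated category 𝒯, and suppose X and Y have HN-systems with quotients in slopes φ_0 < ⋯ < φ_n and ψ_0 < ⋯ < ψ_m respectively, with φ_n < ψ_0. Then Hom^{≤0}(Y, X) = 0. -/
open CategoryTheory Category Limits Pretriangulated
universe v u
variable (C : Type u) [Category.{v} C] [HasZeroObject C] [HasShift C ℤ]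
  [Preadditive C] [∀ n : ℤ, (shiftFunctor C n).Additive] [Pretriangulated C]

structure TFiltration (X : C) (n : ℕ) where
  F : Fin (n + 1) → C
  isoTop : F 0 ≅ X
  isZeroBot : IsZero (F (Fin.last n))
  quot : Fin n → C
  map : ∀ i : Fin n, F i.succ ⟶ F i.castSucc
  π : ∀ i : Fin n, F i.castSucc ⟶ quot i
  δ : ∀ i : Fin n, quot i ⟶ (F i.succ)⟦(1 : ℤ)⟧
  mem : ∀ i : Fin n, Triangle.mk (map i) (π i) (δ i) ∈ distTriang C

structure TStability (Φ : Type) [LinearOrder Φ] where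
  P : Φ → Set C
  nonemptyP : ∀ φ, (P φ).Nonempty
  isoClosed : ∀ (φ : Φ) {X Y : C}, (X ≅ Y) → X ∈ P φ → Y ∈ P φ
  extClosed : ∀ (φ : Φ) (T : Triangle C), (T ∈ distTriang C) →
    T.obj₁ ∈ P φ → T.obj₃ ∈ P φ → T.obj₂ ∈ P φ
  τ : Φ ≃o Φ
  τ_le : ∀ φ, φ ≤ τ φ
  shiftP : ∀ (φ : Φ) (X : C), X ∈ P φ → X⟦(1 : ℤ)⟧ ∈ P (τ φ)
  homVanish : ∀ {ψ φ : Φ}, φ < ψ → ∀ {X Y : C}, X ∈ P ψ → Y ∈ P φ →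
    ∀ k : ℤ, k ≤ 0 → ∀ f : X ⟶ Y⟦k⟧, f = 0
  HN : ∀ X : C, ¬ IsZero X → ∃ (n : ℕ) (filt : TFiltration C X n) (φ : Fin n → Φ),
    StrictMono φ ∧ ∀ i, filt.quot i ∈ P (φ i) ∧ ¬ IsZero (filt.quot i)

variable {C}

/-- `filt` together with slopes `φ` is a Harder–Narasimhan system w.r.t. the t-stability `st`. -/
structure IsHNSystem {Φ : Type} [LinearOrder Φ] (st : TStability C Φ) {X : C} {n : ℕ}
    (filt : TFiltration C X n) (φ : Fin n → Φ) : Prop where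
  strictMono : StrictMono φ
  mem : ∀ i, filt.quot i ∈ st.P (φ i)
  nonzero : ∀ i, ¬ IsZero (filt.quot i)

/-- If all HN-slopes of `X` are smaller than all HN-slopes of `Y`,
then `Hom^{≤0}(Y, X) = 0`. -/
theorem hom_le_zero_vanishing_of_HN_slopes_lt
    {Φ : Type} [LinearOrder Φ] (st : TStability C Φ) {X Y : C} {n m : ℕ}
    (filtX : TFiltration C X (n + 1)) (φ : Fin (n + 1) → Φ)
    (hX : IsHNSystem st filtX φ)
    (filtY : TFiltration C Y (m + 1)) (ψ : Fin (m + 1) → Φ)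
    (hY : IsHNSystem st filtY ψ)
    (hlt : φ (Fin.last n) < ψ 0) :
    ∀ k : ℤ, k ≤ 0 → ∀ f : Y ⟶ X⟦k⟧, f = 0 := by
  intro k hk f
  -- Step 1: for any semistable B of slope ψ' > all slopes of X, Hom(B, X⟦k⟧) = 0.
  have step1 : ∀ (ψ' : Φ), φ (Fin.last n) < ψ' → ∀ (B : C), B ∈ st.P ψ' →
      ∀ g : B ⟶ X⟦k⟧, g = 0 := by
    intro ψ' hψ' B hB
    have key : ∀ i : Fin (n + 2), ∀ g : B ⟶ (filtX.F i)⟦k⟧, g = 0 := by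
      refine Fin.reverseInduction ?_ ?_
      · intro g
        have hz : IsZero ((filtX.F (Fin.last (n + 1)))⟦k⟧) :=
          (shiftFunctor C k).map_isZero filtX.isZeroBot
        exact hz.eq_of_tgt g 0
      · intro i ih g
        -- shifted distinguished triangle
        have hT := Pretriangulated.Triangle.shift_distinguished _
          (filtX.mem i) k
        set T := (CategoryTheory.shiftFunctor (Triangle C) k).obj
          (Triangle.mk (filtX.map i) (filtX.π i) (filtX.δ i)) with hTdef
        -- g ≫ T.mor₂ = 0 since it lands in quot⟦k⟧ which is semistable of smaller slope
        have hφi : φ i < ψ' := lt_of_le_of_lt (hX.strictMono.monotone (Fin.le_last i)) hψ'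
        have hq : ∀ h : B ⟶ (filtX.quot i)⟦k⟧, h = 0 := fun h =>
          st.homVanish hφi hB (hX.mem i) k hk h
        have hg2 : g ≫ T.mor₂ = 0 := by
          have : T.mor₂ = k.negOnePow • (filtX.π i)⟦k⟧' := rfl
          change g ≫ (k.negOnePow • (filtX.π i)⟦k⟧') = 0
          rw [Linear.comp_units_smul, hq (g ≫ (filtX.π i)⟦k⟧'), smul_zero]
        obtain ⟨g', hg'⟩ := Pretriangulated.Triangle.coyoneda_exact₂ T hT g hg2
        have : g' = 0 := ih g'
        rw [hg', this, zero_comp]; rfl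
    intro g
    have h0 : g ≫ (shiftFunctor C k).map filtX.isoTop.inv = 0 :=
      key 0 (g ≫ (shiftFunctor C k).map filtX.isoTop.inv)
    calc g = (g ≫ (shiftFunctor C k).map filtX.isoTop.inv) ≫
            (shiftFunctor C k).map filtX.isoTop.hom := by
          rw [assoc, ← Functor.map_comp]; simp
      _ = 0 := by rw [h0, zero_comp]
  -- Step 2: induction along the filtration of Y
  have key : ∀ j : Fin (m + 2), ∀ g : filtY.F j ⟶ X⟦k⟧, g = 0 := by
    refine Fin.reverseInduction ?_ ?_
    · intro g
      exact filtY.isZeroBot.eq_of_src g 0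
    · intro j ih g
      have hT := filtY.mem j
      have hg1 : (Triangle.mk (filtY.map j) (filtY.π j) (filtY.δ j)).mor₁ ≫ g = 0 :=
        ih (filtY.map j ≫ g)
      obtain ⟨g', hg'⟩ := Pretriangulated.Triangle.yoneda_exact₂ _ hT g hg1
      have hψ0 : φ (Fin.last n) < ψ j := lt_of_lt_of_le hlt (hY.strictMono.monotone (Fin.zero_le j))
      have : g' = 0 := step1 (ψ j) hψ0 _ (hY.mem j) g'
      rw [hg', this, comp_zero]; rfl
  have := key 0 (filtY.isoTop.hom ≫ f)
  have h2 : filtY.isoTop.inv ≫ filtY.isoTop.hom ≫ f = filtY.isoTop.inv ≫ 0 := by rw [this]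
  simpa using h2
end

section
/- Let (Φ, {Π_φ}) be a t-stability on a triangulated category 𝒯. Then the Harder–Narasimhan system of any nonzero object X is unique: if X admits two HN-systems with quotients X_{φ_0}, …, X_{φ_n} (φ_0 < ⋯ < φ_n) and X_{ψ_0}, …, X_{ψ_m} (ψ_0 < ⋯ < ψ_m), then n = m, φ_i = ψ_i for all i, and the identity of X extends to a (unique) isomorphism of the two Postnikov systems. -/
open CategoryTheory Category Limits Pretriangulated
universe v u
variable (C : Type u) [Category.{v} C] [HasZeroObject C] [HasShift C ℤ]
  [Preadditive C] [∀ n : ℤ, (shiftFunctor C n).Additive] [Pretriangulated C]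

variable {C}

/-- An isomorphism of Postnikov systems (t-filtrations) of the same object `X`
extending the identity of `X`. -/
structure FiltIso {X : C} {n m : ℕ} (f₁ : TFiltration C X n) (f₂ : TFiltration C X m)
    (h : n = m) where
  eF : ∀ i : Fin (n + 1), f₁.F i ≅ f₂.F (Fin.cast (by rw [h]) i)
  eQ : ∀ i : Fin n, f₁.quot i ≅ f₂.quot (Fin.cast (by rw [h]) i)
  compat_top : (eF 0).hom ≫ f₂.isoTop.hom = f₁.isoTop.hom
  comm_map : ∀ i : Fin n,
    (eF i.succ).hom ≫ f₂.map (Fin.cast (by rw [h]) i) = f₁.map i ≫ (eF i.castSucc).hom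
  comm_π : ∀ i : Fin n,
    (eF i.castSucc).hom ≫ f₂.π (Fin.cast (by rw [h]) i) = f₁.π i ≫ (eQ i).hom
  comm_δ : ∀ i : Fin n,
    (eQ i).hom ≫ f₂.δ (Fin.cast (by rw [h]) i) = f₁.δ i ≫ ((eF i.succ).hom)⟦(1 : ℤ)⟧'

/-! ### Auxiliary lemmas for the uniqueness of Harder–Narasimhan systems -/

section Aux

variable {Φ : Type} [LinearOrder Φ]

/-- Hom-vanishing for unshifted morphisms. -/
lemma homVanish₀ (st : TStability C Φ) {ψ φ : Φ} (h : φ < ψ) {A B : C}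
    (hA : A ∈ st.P ψ) (hB : B ∈ st.P φ) (g : A ⟶ B) : g = 0 := by
  have h0 : g ≫ (shiftFunctorZero C ℤ).inv.app B = 0 :=
    st.homVanish h hA hB 0 le_rfl _
  exact (cancel_mono ((shiftFunctorZero C ℤ).inv.app B)).1 (by rw [h0, zero_comp])

lemma vanish_aux (st : TStability C Φ) {X : C} {n : ℕ}
    (f : TFiltration C X n) (φ : Fin n → Φ) (hmem : ∀ i, f.quot i ∈ st.P (φ i))
    {β : Φ} {B : C} (hB : B ∈ st.P β) :
    ∀ (d : ℕ) (j : Fin (n + 1)), n - j.val ≤ d → (∀ i : Fin n, j.val ≤ i.val → β < φ i) →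
      ∀ (k : ℤ), k ≤ 0 → ∀ g : f.F j ⟶ B⟦k⟧, g = 0 := by
  intro d
  induction d with
  | zero =>
    intro j hj _ k _ g
    have hz : IsZero (f.F j) := by
      have hv : j = Fin.last n := by
        have := j.isLt
        ext
        simp only [Fin.val_last]
        omega
      rw [hv]; exact f.isZeroBot
    exact hz.eq_of_src g 0
  | succ d ih =>
    intro j hj hβ k hk g
    by_cases hc : j.val < n
    · have h1 : f.map ⟨j.val, hc⟩ ≫ g = 0 :=
        ih (Fin.succ ⟨j.val, hc⟩) (by simp only [Fin.val_succ]; omega)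
          (fun i hi => hβ i (by simp only [Fin.val_succ] at hi; omega)) k hk _
      obtain ⟨h, hh⟩ := Triangle.yoneda_exact₂ _ (f.mem ⟨j.val, hc⟩) g h1
      have h0 := st.homVanish (hβ ⟨j.val, hc⟩ le_rfl) (hmem _) hB k hk h
      subst h0
      rw [hh]; exact comp_zero
    · have hz : IsZero (f.F j) := by
        have hv : j = Fin.last n := by
          have := j.isLt
          ext
          simp only [Fin.val_last]
          omega
        rw [hv]; exact f.isZeroBot
      exact hz.eq_of_src g 0

lemma vanish (st : TStability C Φ) {X : C} {n : ℕ}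
    (f : TFiltration C X n) (φ : Fin n → Φ) (hmem : ∀ i, f.quot i ∈ st.P (φ i))
    {β : Φ} {B : C} (hB : B ∈ st.P β) (j : Fin (n + 1))
    (hβ : ∀ i : Fin n, j.val ≤ i.val → β < φ i)
    (k : ℤ) (hk : k ≤ 0) (g : f.F j ⟶ B⟦k⟧) : g = 0 :=
  vanish_aux st f φ hmem hB n j (by omega) hβ k hk g

lemma vanish₀ (st : TStability C Φ) {X : C} {n : ℕ}
    (f : TFiltration C X n) (φ : Fin n → Φ) (hmem : ∀ i, f.quot i ∈ st.P (φ i))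
    {β : Φ} {B : C} (hB : B ∈ st.P β) (j : Fin (n + 1))
    (hβ : ∀ i : Fin n, j.val ≤ i.val → β < φ i)
    (g : f.F j ⟶ B) : g = 0 := by
  have h0 : g ≫ (shiftFunctorZero C ℤ).inv.app B = 0 :=
    vanish st f φ hmem hB j hβ 0 le_rfl _
  exact (cancel_mono ((shiftFunctorZero C ℤ).inv.app B)).1 (by rw [h0, zero_comp])

lemma vanish₁ (st : TStability C Φ) {X : C} {n : ℕ}
    (f : TFiltration C X n) (φ : Fin n → Φ) (hmem : ∀ i, f.quot i ∈ st.P (φ i))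
    {β : Φ} {B : C} (hB : B ∈ st.P β) (j : Fin (n + 1))
    (hβ : ∀ i : Fin n, j.val ≤ i.val → β < φ i)
    (g : (f.F j)⟦(1 : ℤ)⟧ ⟶ B) : g = 0 := by
  have h0 : (shiftFunctorCompIsoId C (1 : ℤ) (-1 : ℤ) (by ring)).inv.app (f.F j) ≫
      (shiftFunctor C (-1 : ℤ)).map g = 0 :=
    vanish st f φ hmem hB j hβ (-1) (by omega) _
  have h1 : (shiftFunctor C (-1 : ℤ)).map g = 0 := by
    rw [← cancel_epi ((shiftFunctorCompIsoId C (1 : ℤ) (-1 : ℤ) (by ring)).inv.app (f.F j)),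
      h0, comp_zero]
  exact (shiftFunctor C (-1 : ℤ)).map_injective (by rw [h1, Functor.map_zero])

/-- If a morphism out of a quotient becomes zero after composing with `π`, and its target has
slope smaller than all later slopes, then it is zero. -/
lemma cancel_π (st : TStability C Φ) {X : C} {n : ℕ}
    (f : TFiltration C X n) (φ : Fin n → Φ) (hmem : ∀ i, f.quot i ∈ st.P (φ i))
    {β : Φ} {B : C} (hB : B ∈ st.P β) (i : Fin n)
    (hβ : ∀ i' : Fin n, i.val < i'.val → β < φ i')
    (q : f.quot i ⟶ B) (hq : f.π i ≫ q = 0) : q = 0 := by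
  obtain ⟨r, hr⟩ := Triangle.yoneda_exact₂ _ (rot_of_distTriang _ (f.mem i)) q hq
  have hr0 : r = 0 :=
    vanish₁ st f φ hmem hB i.succ
      (fun i' hi' => hβ i' (by simp only [Fin.val_succ] at hi'; omega)) r
  subst hr0
  rw [hr]; exact comp_zero

lemma pi_ne_zero (st : TStability C Φ) {X : C} {n : ℕ}
    (f : TFiltration C X n) (φ : Fin n → Φ) (h : IsHNSystem st f φ) (i : Fin n) :
    f.π i ≠ 0 := by
  intro hπ
  have hid : 𝟙 (f.quot i) = 0 :=
    cancel_π st f φ h.mem (h.mem i) i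
      (fun i' hi' => h.strictMono (show i < i' from hi')) (𝟙 _) (by rw [comp_id, hπ])
  exact h.nonzero i ((IsZero.iff_id_eq_zero _).2 hid)

lemma filt_no_zero (st : TStability C Φ) {X : C} {n : ℕ}
    (f : TFiltration C X n) (φ : Fin n → Φ) (h : IsHNSystem st f φ) (i : Fin n)
    (hz : IsZero (f.F i.castSucc)) : False :=
  pi_ne_zero st f φ h i (hz.eq_of_src _ _)

lemma isZero_of_filt_zero {X : C} (f : TFiltration C X 0) : IsZero X :=
  f.isZeroBot.of_iso (f.isoTop.symm ≪≫ eqToIso (congrArg f.F (Fin.fin_one_eq_zero (Fin.last 0)).symm))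

lemma exists_factor (st : TStability C Φ) {X : C} {k l : ℕ}
    (f₁ : TFiltration C X (k + 1)) (φ : Fin (k + 1) → Φ) (h₁ : IsHNSystem st f₁ φ)
    (f₂ : TFiltration C X (l + 1)) (ψ : Fin (l + 1) → Φ) (h₂ : IsHNSystem st f₂ ψ)
    (hlt : ∀ i : Fin (l + 1), 0 < i.val → φ 0 < ψ i) :
    ∃ g : f₂.quot 0 ⟶ f₁.quot 0,
      (f₂.isoTop.hom ≫ f₁.isoTop.inv) ≫ f₁.π 0 = f₂.π 0 ≫ g := by
  have h0 : f₂.map 0 ≫ (f₂.isoTop.hom ≫ f₁.isoTop.inv) ≫ f₁.π 0 = 0 := by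
    apply vanish₀ st f₂ ψ h₂.mem (h₁.mem 0) ((0 : Fin (l + 1)).succ)
      (fun i hi => hlt i (by simp only [Fin.val_succ] at hi; omega))
  obtain ⟨g, hg⟩ := Triangle.yoneda_exact₂ _ (f₂.mem 0)
    ((f₂.isoTop.hom ≫ f₁.isoTop.inv) ≫ f₁.π 0) h0
  exact ⟨g, hg⟩

lemma slope_zero_le (st : TStability C Φ) {X : C} {k l : ℕ}
    (f₁ : TFiltration C X (k + 1)) (φ : Fin (k + 1) → Φ) (h₁ : IsHNSystem st f₁ φ)
    (f₂ : TFiltration C X (l + 1)) (ψ : Fin (l + 1) → Φ) (h₂ : IsHNSystem st f₂ ψ) :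
    ψ 0 ≤ φ 0 := by
  by_contra hcon
  push_neg at hcon
  obtain ⟨g, hg⟩ := exists_factor st f₁ φ h₁ f₂ ψ h₂
    (fun i _ => lt_of_lt_of_le hcon (h₂.strictMono.monotone (Fin.zero_le i)))
  have hgz : g = 0 := homVanish₀ st hcon (h₂.mem 0) (h₁.mem 0) g
  rw [hgz, comp_zero] at hg
  have hπ : f₁.π 0 = 0 := by
    have h' : (f₂.isoTop.hom ≫ f₁.isoTop.inv) ≫ f₁.π 0 =
        (f₂.isoTop.hom ≫ f₁.isoTop.inv) ≫ 0 := by rw [hg]; exact comp_zero.symm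
    exact (cancel_epi (f₂.isoTop.hom ≫ f₁.isoTop.inv)).1 h'
  exact pi_ne_zero st f₁ φ h₁ 0 hπ

/-- The tail of a filtration: drop the top layer. -/
def TFiltration.tail {X : C} {k : ℕ} (f : TFiltration C X (k + 1)) :
    TFiltration C (f.F ⟨1, by omega⟩) k where
  F j := f.F ⟨j.val + 1, by omega⟩
  isoTop := Iso.refl _
  isZeroBot := by
    have h : (⟨(Fin.last k).val + 1, by omega⟩ : Fin (k + 2)) = Fin.last (k + 1) := by
      ext; simp
    show IsZero (f.F ⟨(Fin.last k).val + 1, by omega⟩)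
    rw [h]; exact f.isZeroBot
  quot j := f.quot ⟨j.val + 1, by omega⟩
  map j := f.map ⟨j.val + 1, by omega⟩
  π j := f.π ⟨j.val + 1, by omega⟩
  δ j := f.δ ⟨j.val + 1, by omega⟩
  mem j := f.mem ⟨j.val + 1, by omega⟩

/-- Transport a filtration along an isomorphism of the top object. -/
def TFiltration.ofIso {X Y : C} (e : X ≅ Y) {n : ℕ} (f : TFiltration C X n) :
    TFiltration C Y n :=
  { f with isoTop := f.isoTop ≪≫ e }

lemma tail_HN (st : TStability C Φ) {X : C} {k : ℕ}
    (f : TFiltration C X (k + 1)) (φ : Fin (k + 1) → Φ) (h : IsHNSystem st f φ) :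
    IsHNSystem st f.tail (fun j => φ ⟨j.val + 1, by omega⟩) where
  strictMono a b hab := h.strictMono
    (show (⟨a.val + 1, by omega⟩ : Fin (k + 1)) < ⟨b.val + 1, by omega⟩ by
      simp only [Fin.lt_def] at hab ⊢; omega)
  mem j := h.mem _
  nonzero j := h.nonzero _

lemma ofIso_HN (st : TStability C Φ) {X Y : C} (e : X ≅ Y) {n : ℕ}
    (f : TFiltration C X n) (φ : Fin n → Φ) (h : IsHNSystem st f φ) :
    IsHNSystem st (f.ofIso e) φ :=
  ⟨h.strictMono, h.mem, h.nonzero⟩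

/-- Any two length-0 filtrations of the same object are isomorphic. -/
def filtIsoZero {X : C} (t₁ t₂ : TFiltration C X 0) : FiltIso t₁ t₂ rfl where
  eF j := eqToIso (congrArg t₁.F (Fin.fin_one_eq_zero j)) ≪≫ t₁.isoTop ≪≫ t₂.isoTop.symm ≪≫
    eqToIso (congrArg t₂.F (Fin.fin_one_eq_zero (Fin.cast rfl j)).symm)
  eQ i := i.elim0
  compat_top := by simp
  comm_map i := i.elim0
  comm_π i := i.elim0
  comm_δ i := i.elim0

end Aux

theorem HN_aux {Φ : Type} [LinearOrder Φ] (st : TStability C Φ) :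
    ∀ (n : ℕ) {m : ℕ} {X : C}, ¬ IsZero X →
      ∀ (f₁ : TFiltration C X n) (φ : Fin n → Φ), IsHNSystem st f₁ φ →
      ∀ (f₂ : TFiltration C X m) (ψ : Fin m → Φ), IsHNSystem st f₂ ψ →
      ∃ hnm : n = m, (∀ i : Fin n, φ i = ψ (Fin.cast hnm i)) ∧
        Nonempty (FiltIso f₁ f₂ hnm) := by
  intro n
  induction n with
  | zero =>
    intro m X hX f₁ φ h₁ f₂ ψ h₂
    exact absurd (isZero_of_filt_zero f₁) hX
  | succ k ih =>
    intro m X hX f₁ φ h₁ f₂ ψ h₂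
    obtain _ | l := m
    · exact absurd (isZero_of_filt_zero f₂) hX
    have hφψ : φ 0 = ψ 0 :=
      le_antisymm (slope_zero_le st f₂ ψ h₂ f₁ φ h₁) (slope_zero_le st f₁ φ h₁ f₂ ψ h₂)
    obtain ⟨g, hg⟩ := exists_factor st f₁ φ h₁ f₂ ψ h₂
      (fun i hi => lt_of_le_of_lt hφψ.le (h₂.strictMono (show (0 : Fin (l + 1)) < i from hi)))
    obtain ⟨g', hg'⟩ := exists_factor st f₂ ψ h₂ f₁ φ h₁
      (fun i hi => lt_of_le_of_lt hφψ.ge (h₁.strictMono (show (0 : Fin (k + 1)) < i from hi)))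
    -- `g` and `g'` are mutually inverse
    have key : f₁.π 0 ≫ g' ≫ g = f₁.π 0 := by
      have e1 : (f₁.isoTop.hom ≫ f₂.isoTop.inv) ≫ ((f₂.isoTop.hom ≫ f₁.isoTop.inv) ≫ f₁.π 0) =
          f₁.π 0 :=
        (assoc _ _ _).trans ((congrArg (f₁.isoTop.hom ≫ ·) ((congrArg (f₂.isoTop.inv ≫ ·)
          (assoc _ _ _)).trans (Iso.inv_hom_id_assoc f₂.isoTop _))).trans
          (Iso.hom_inv_id_assoc f₁.isoTop _))
      exact ((assoc _ _ _).symm.trans (congrArg (· ≫ g) hg'.symm)).trans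
        ((assoc _ _ _).trans ((congrArg _ hg.symm).trans e1))
    have key' : f₂.π 0 ≫ g ≫ g' = f₂.π 0 := by
      have e1 : (f₂.isoTop.hom ≫ f₁.isoTop.inv) ≫ ((f₁.isoTop.hom ≫ f₂.isoTop.inv) ≫ f₂.π 0) =
          f₂.π 0 :=
        (assoc _ _ _).trans ((congrArg (f₂.isoTop.hom ≫ ·) ((congrArg (f₁.isoTop.inv ≫ ·)
          (assoc _ _ _)).trans (Iso.inv_hom_id_assoc f₁.isoTop _))).trans
          (Iso.hom_inv_id_assoc f₂.isoTop _))
      exact ((assoc _ _ _).symm.trans (congrArg (· ≫ g') hg.symm)).trans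
        ((assoc _ _ _).trans ((congrArg _ hg'.symm).trans e1))
    have hcomp : g' ≫ g = 𝟙 (f₁.quot 0) := by
      have hq : f₁.π 0 ≫ (g' ≫ g - 𝟙 _) = 0 := by
        rw [Preadditive.comp_sub, comp_id, key, sub_self]
      exact sub_eq_zero.1 (cancel_π st f₁ φ h₁.mem (h₁.mem 0) 0
        (fun i' hi' => h₁.strictMono (show (0 : Fin (k + 1)) < i' from hi')) _ hq)
    have hcomp' : g ≫ g' = 𝟙 (f₂.quot 0) := by
      have hq : f₂.π 0 ≫ (g ≫ g' - 𝟙 _) = 0 := by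
        rw [Preadditive.comp_sub, comp_id, key', sub_self]
      exact sub_eq_zero.1 (cancel_π st f₂ ψ h₂.mem (hφψ ▸ h₂.mem 0) 0
        (fun i' hi' => hφψ ▸ h₂.strictMono (show (0 : Fin (l + 1)) < i' from hi')) _ hq)
    -- complete to a morphism of triangles
    obtain ⟨a, ha₁, ha₂⟩ := complete_distinguished_triangle_morphism₁ _ _
      (f₁.mem 0) (f₂.mem 0) (f₁.isoTop.hom ≫ f₂.isoTop.inv) g' hg'.symm
    have hIso' : IsIso g' := ⟨g, hcomp, hcomp'⟩
    have hIsoA : IsIso a := by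
      refine isIso₁_of_isIso₂₃
        (T := Triangle.mk (f₁.map 0) (f₁.π 0) (f₁.δ 0))
        (T' := Triangle.mk (f₂.map 0) (f₂.π 0) (f₂.δ 0))
        { hom₁ := a, hom₂ := f₁.isoTop.hom ≫ f₂.isoTop.inv, hom₃ := g',
          comm₁ := ha₁, comm₂ := hg'.symm, comm₃ := ha₂ }
        (f₁.mem 0) (f₂.mem 0) ?_ ?_
      · show IsIso (f₁.isoTop.hom ≫ f₂.isoTop.inv)
        infer_instance
      · exact hIso'
    have main : ∃ hkl : k = l,
        (∀ j : Fin k, (fun j : Fin k => φ ⟨j.val + 1, by omega⟩) j =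
          (fun j : Fin l => ψ ⟨j.val + 1, by omega⟩) (Fin.cast hkl j)) ∧
        Nonempty (FiltIso f₁.tail ((f₂.tail).ofIso (asIso a).symm) hkl) := by
      by_cases hz : IsZero (f₁.F (⟨1, by omega⟩ : Fin (k + 2)))
      · have hz₂ : IsZero (f₂.F (⟨1, by omega⟩ : Fin (l + 2))) := hz.of_iso (asIso a).symm
        have hk : k = 0 := by
          by_contra hk0
          exact filt_no_zero st f₁ φ h₁ (⟨1, by omega⟩ : Fin (k + 1)) hz
        have hl : l = 0 := by
          by_contra hl0
          exact filt_no_zero st f₂ ψ h₂ (⟨1, by omega⟩ : Fin (l + 1)) hz₂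
        subst hk; subst hl
        exact ⟨rfl, fun j => j.elim0, ⟨filtIsoZero _ _⟩⟩
      · exact ih hz f₁.tail _ (tail_HN st f₁ φ h₁) ((f₂.tail).ofIso (asIso a).symm) _
          (ofIso_HN st (asIso a).symm f₂.tail _ (tail_HN st f₂ ψ h₂))
    have ha₁' : f₁.map 0 ≫ (f₁.isoTop.hom ≫ f₂.isoTop.inv) = a ≫ f₂.map 0 := ha₁
    have ha₂' : f₁.δ 0 ≫ (shiftFunctor C (1 : ℤ)).map a = g' ≫ f₂.δ 0 := ha₂
    obtain ⟨hkl, hsl, ⟨E⟩⟩ := main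
    subst hkl
    have hE0 : (E.eF 0).hom = a := by
      have h := E.compat_top
      dsimp only [TFiltration.ofIso, TFiltration.tail] at h
      simp only [Iso.trans_hom, Iso.refl_hom, Iso.symm_hom, asIso_inv, id_comp] at h
      have h' := (Iso.comp_inv_eq_id (Iso.refl _ ≪≫ (asIso a).symm).symm).1 h
      exact h'.trans (comp_id a)
    refine ⟨rfl, ?_, ⟨?_⟩⟩
    · intro i
      obtain ⟨iv, hiv⟩ := i
      cases iv with
      | zero => exact hφψ
      | succ v => exact hsl ⟨v, by omega⟩
    · refine
        { eF := fun j => match j with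
            | ⟨0, hj⟩ => f₁.isoTop ≪≫ f₂.isoTop.symm
            | ⟨v + 1, hj⟩ => E.eF ⟨v, by omega⟩,
          eQ := fun i => match i with
            | ⟨0, hi⟩ => ⟨g', g, hcomp, hcomp'⟩
            | ⟨v + 1, hi⟩ => E.eQ ⟨v, by omega⟩,
          compat_top := ?_, comm_map := ?_, comm_π := ?_, comm_δ := ?_ }
      · show (f₁.isoTop ≪≫ f₂.isoTop.symm).hom ≫ f₂.isoTop.hom = f₁.isoTop.hom
        simp
      · intro i
        obtain ⟨iv, hiv⟩ := i
        cases iv with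
        | zero =>
          show (E.eF (0 : Fin (k + 1))).hom ≫ f₂.map 0 =
            f₁.map 0 ≫ (f₁.isoTop ≪≫ f₂.isoTop.symm).hom
          rw [hE0]
          simp only [Iso.trans_hom, Iso.symm_hom]
          exact ha₁'.symm
        | succ v => exact E.comm_map ⟨v, by omega⟩
      · intro i
        obtain ⟨iv, hiv⟩ := i
        cases iv with
        | zero =>
          show (f₁.isoTop ≪≫ f₂.isoTop.symm).hom ≫ f₂.π 0 = f₁.π 0 ≫ g'
          simpa using hg'
        | succ v => exact E.comm_π ⟨v, by omega⟩
      · intro i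
        obtain ⟨iv, hiv⟩ := i
        cases iv with
        | zero =>
          show g' ≫ f₂.δ 0 = f₁.δ 0 ≫ ((E.eF (0 : Fin (k + 1))).hom)⟦(1 : ℤ)⟧'
          rw [hE0]
          exact ha₂'.symm
        | succ v => exact E.comm_δ ⟨v, by omega⟩

theorem filtIso_unique {Φ : Type} [LinearOrder Φ] (st : TStability C Φ) {X : C} {n : ℕ}
    (f₁ : TFiltration C X n) (φ : Fin n → Φ) (h₁ : IsHNSystem st f₁ φ)
    (f₂ : TFiltration C X n) (ψ : Fin n → Φ) (h₂ : IsHNSystem st f₂ ψ)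
    (hφψ : ∀ i, φ i = ψ i) :
    Subsingleton (FiltIso f₁ f₂ rfl) := by
  constructor
  intro E E'
  have hF : ∀ j : Fin (n + 1), E.eF j = E'.eF j := by
    intro j
    induction j using Fin.induction with
    | zero =>
      apply Iso.ext
      exact (cancel_mono f₂.isoTop.hom).1 (E.compat_top.trans E'.compat_top.symm)
    | succ j hj =>
      apply Iso.ext
      have hd : ((E.eF j.succ).hom - (E'.eF j.succ).hom) ≫ f₂.map (Fin.cast rfl j) = 0 := by
        rw [Preadditive.sub_comp, E.comm_map j, E'.comm_map j, hj, sub_self]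
      obtain ⟨h, hh⟩ := Triangle.coyoneda_exact₂ _
        (inv_rot_of_distTriang _ (f₂.mem (Fin.cast rfl j)))
        ((E.eF j.succ).hom - (E'.eF j.succ).hom) hd
      have hz : h = 0 := by
        apply vanish st f₁ φ h₁.mem (h₂.mem (Fin.cast rfl j)) j.succ
          (fun i' hi' => by
            have h' := h₁.strictMono (show j < i' from by
              simp only [Fin.val_succ] at hi'
              simp only [Fin.lt_def]; omega)
            rwa [hφψ j] at h')
          (-1) (by omega)
      rw [hz, zero_comp] at hh
      exact sub_eq_zero.1 hh
  have hQ : ∀ j : Fin n, E.eQ j = E'.eQ j := by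
    intro j
    apply Iso.ext
    have hd : f₁.π j ≫ ((E.eQ j).hom - (E'.eQ j).hom) = 0 := by
      rw [Preadditive.comp_sub, ← E.comm_π j, ← E'.comm_π j, hF j.castSucc, sub_self]
    have := cancel_π st f₁ φ h₁.mem (h₂.mem (Fin.cast rfl j)) j
      (fun i' hi' => by
        have h' := h₁.strictMono (show j < i' from by simp only [Fin.lt_def]; omega)
        rwa [hφψ j] at h') _ hd
    exact sub_eq_zero.1 this
  have h1 : E.eF = E'.eF := funext hF
  have h2 : E.eQ = E'.eQ := funext hQ
  cases E; cases E'; cases h1; cases h2; rfl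

/-- Uniqueness of the Harder–Narasimhan system: two HN-systems of the same nonzero object
have the same length, the same slopes, and the identity of `X` extends to a unique
isomorphism of the two Postnikov systems. -/
theorem HN_system_unique
    {Φ : Type} [LinearOrder Φ] (st : TStability C Φ) {X : C} (hX : ¬ IsZero X) {n m : ℕ}
    (f₁ : TFiltration C X n) (φ : Fin n → Φ) (h₁ : IsHNSystem st f₁ φ)
    (f₂ : TFiltration C X m) (ψ : Fin m → Φ) (h₂ : IsHNSystem st f₂ ψ) :
    ∃ hnm : n = m,
      (∀ i : Fin n, φ i = ψ (Fin.cast hnm i)) ∧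
      Nonempty (FiltIso f₁ f₂ hnm) ∧ Subsingleton (FiltIso f₁ f₂ hnm) := by
  obtain ⟨hnm, hsl, hne⟩ := HN_aux st n hX f₁ φ h₁ f₂ ψ h₂
  subst hnm
  exact ⟨rfl, hsl, hne,
    filtIso_unique st f₁ φ h₁ f₂ ψ h₂
      (fun i => (hsl i).trans (congrArg ψ (Fin.ext rfl)))⟩
end

section
/- In a triangulated category 𝒯, let X and Y have t-filtrations with quotients (X_0, …, X_n) and (Y_0, …, Y_m). Then for each shuffle of the two quotient sequences (any linear ordering of the disjoint union respecting the order within each sequence), the direct sum X ⊕ Y admits a t-filtration whose quotients are the shuffled sequence (Z_0, …, Z_{n+m+1}). -/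
open CategoryTheory Category Limits Pretriangulated
universe v u
variable (C : Type u) [Category.{v} C] [HasZeroObject C] [HasShift C ℤ]
  [Preadditive C] [∀ n : ℤ, (shiftFunctor C n).Additive] [Pretriangulated C]

variable {C}

namespace ShuffleAux

/-- A `Bool`-indexed pair of triangles. -/
def pairT (T₁ T₂ : Triangle C) : Bool → Triangle C := fun b => Bool.rec T₂ T₁ b

@[simp] lemma pairT_true (T₁ T₂ : Triangle C) : pairT T₁ T₂ true = T₁ := rfl
@[simp] lemma pairT_false (T₁ T₂ : Triangle C) : pairT T₁ T₂ false = T₂ := rfl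

omit [HasShift C ℤ] [∀ n : ℤ, (shiftFunctor C n).Additive] [Pretriangulated C] in
lemma hasProd [HasBinaryBiproducts C] (W : Bool → C) : HasProduct W := by
  haveI : HasTerminal C := HasZeroObject.hasTerminal
  haveI : HasFiniteProducts C := hasFiniteProducts_of_has_binary_and_terminal
  infer_instance

lemma sum_distTriang_left [HasBinaryBiproducts C] {A' A Q : C}
    (f : A' ⟶ A) (p : A ⟶ Q) (d : Q ⟶ A'⟦(1:ℤ)⟧)
    (hT : Triangle.mk f p d ∈ distTriang C) (B : C) :
    Triangle.mk (biprod.map f (𝟙 B)) (biprod.fst ≫ p)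
      (d ≫ (biprod.inl : A' ⟶ A' ⊞ B)⟦(1:ℤ)⟧') ∈ distTriang C := by
  let T : Bool → Triangle C := pairT (Triangle.mk f p d) (contractibleTriangle B)
  haveI := hasProd (fun b => (T b).obj₁)
  haveI := hasProd (fun b => (T b).obj₂)
  haveI := hasProd (fun b => (T b).obj₃)
  haveI := hasProd (fun b => (T b).obj₁⟦(1:ℤ)⟧)
  have hprod : productTriangle T ∈ distTriang C :=
    productTriangle_distinguished T (by
      rintro (_|_)
      · exact contractible_distinguished B
      · exact hT)
  let φ₁ : Triangle.mk (biprod.map f (𝟙 B)) (biprod.fst ≫ p)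
      (d ≫ (biprod.inl : A' ⟶ A' ⊞ B)⟦(1:ℤ)⟧') ⟶ T true :=
    { hom₁ := biprod.fst
      hom₂ := biprod.fst
      hom₃ := 𝟙 Q
      comm₁ := by
        change biprod.map f (𝟙 B) ≫ biprod.fst = biprod.fst ≫ f
        simp [T]
      comm₂ := by
        change (biprod.fst ≫ p) ≫ 𝟙 Q = biprod.fst ≫ p
        simp [T]
      comm₃ := by
        change (d ≫ (biprod.inl : A' ⟶ A' ⊞ B)⟦(1:ℤ)⟧') ≫ (biprod.fst : A' ⊞ B ⟶ A')⟦(1:ℤ)⟧' = 𝟙 Q ≫ d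
        simp [T, ← Functor.map_comp] }
  let φ₂ : Triangle.mk (biprod.map f (𝟙 B)) (biprod.fst ≫ p)
      (d ≫ (biprod.inl : A' ⟶ A' ⊞ B)⟦(1:ℤ)⟧') ⟶ T false :=
    { hom₁ := biprod.snd
      hom₂ := biprod.snd
      hom₃ := 0
      comm₁ := by
        change biprod.map f (𝟙 B) ≫ biprod.snd = biprod.snd ≫ 𝟙 B
        simp [T, contractibleTriangle]
      comm₂ := by
        open ZeroObject in change (biprod.fst ≫ p) ≫ (0 : Q ⟶ 0) = biprod.snd ≫ (0 : B ⟶ 0)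
        simp [T, contractibleTriangle]
      comm₃ := by
        open ZeroObject in change (d ≫ (biprod.inl : A' ⟶ A' ⊞ B)⟦(1:ℤ)⟧') ≫ (biprod.snd : A' ⊞ B ⟶ B)⟦(1:ℤ)⟧' = (0 : Q ⟶ 0) ≫ (0 : (0 : C) ⟶ B⟦(1:ℤ)⟧)
        simp [T, contractibleTriangle, ← Functor.map_comp] }
  let φ := productTriangle.lift T
    (fun b => Bool.rec (motive := fun b => _ ⟶ T b) φ₂ φ₁ b)
  haveI h₁ : IsIso φ.hom₁ := by
    refine ⟨biprod.lift (Pi.π _ true) (Pi.π _ false), ?_, ?_⟩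
    · apply biprod.hom_ext
      · erw [assoc, biprod.lift_fst, id_comp, Pi.lift_π]
      · erw [assoc, biprod.lift_snd, id_comp, Pi.lift_π]
    · apply limit.hom_ext
      rintro ⟨(_|_)⟩
      · erw [assoc, limit.lift_π, id_comp]; exact biprod.lift_snd _ _
      · erw [assoc, limit.lift_π, id_comp]; exact biprod.lift_fst _ _
  haveI h₂ : IsIso φ.hom₂ := by
    refine ⟨biprod.lift (Pi.π _ true) (Pi.π _ false), ?_, ?_⟩
    · apply biprod.hom_ext
      · erw [assoc, biprod.lift_fst, id_comp, Pi.lift_π]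
      · erw [assoc, biprod.lift_snd, id_comp, Pi.lift_π]
    · apply limit.hom_ext
      rintro ⟨(_|_)⟩
      · erw [assoc, limit.lift_π, id_comp]; exact biprod.lift_snd _ _
      · erw [assoc, limit.lift_π, id_comp]; exact biprod.lift_fst _ _
  haveI h₃ : IsIso φ.hom₃ := by
    have hz : IsZero ((T false).obj₃) := by
      simp only [T, pairT_false, contractibleTriangle]
      exact isZero_zero C
    refine ⟨Pi.π _ true, ?_, ?_⟩
    · erw [Pi.lift_π]; rfl
    · apply limit.hom_ext
      rintro ⟨(_|_)⟩
      · exact hz.eq_of_tgt _ _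
      · erw [assoc, limit.lift_π, id_comp]; exact comp_id _
  haveI : IsIso φ := Triangle.isIso_of_isIsos φ h₁ h₂ h₃
  exact isomorphic_distinguished _ hprod _ (asIso φ)

lemma sum_distTriang_right [HasBinaryBiproducts C] {A' A Q : C}
    (f : A' ⟶ A) (p : A ⟶ Q) (d : Q ⟶ A'⟦(1:ℤ)⟧)
    (hT : Triangle.mk f p d ∈ distTriang C) (B : C) :
    Triangle.mk (biprod.map (𝟙 B) f) (biprod.snd ≫ p)
      (d ≫ (biprod.inr : A' ⟶ B ⊞ A')⟦(1:ℤ)⟧') ∈ distTriang C := by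
  let T : Bool → Triangle C := pairT (Triangle.mk f p d) (contractibleTriangle B)
  haveI := hasProd (fun b => (T b).obj₁)
  haveI := hasProd (fun b => (T b).obj₂)
  haveI := hasProd (fun b => (T b).obj₃)
  haveI := hasProd (fun b => (T b).obj₁⟦(1:ℤ)⟧)
  have hprod : productTriangle T ∈ distTriang C :=
    productTriangle_distinguished T (by
      rintro (_|_)
      · exact contractible_distinguished B
      · exact hT)
  let φ₁ : Triangle.mk (biprod.map (𝟙 B) f) (biprod.snd ≫ p)
      (d ≫ (biprod.inr : A' ⟶ B ⊞ A')⟦(1:ℤ)⟧') ⟶ T true :=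
    { hom₁ := biprod.snd
      hom₂ := biprod.snd
      hom₃ := 𝟙 Q
      comm₁ := by
        change biprod.map (𝟙 B) f ≫ biprod.snd = biprod.snd ≫ f
        simp [T]
      comm₂ := by
        change (biprod.snd ≫ p) ≫ 𝟙 Q = biprod.snd ≫ p
        simp [T]
      comm₃ := by
        change (d ≫ (biprod.inr : A' ⟶ B ⊞ A')⟦(1:ℤ)⟧') ≫ (biprod.snd : B ⊞ A' ⟶ A')⟦(1:ℤ)⟧' = 𝟙 Q ≫ d
        simp [T, ← Functor.map_comp] }
  let φ₂ : Triangle.mk (biprod.map (𝟙 B) f) (biprod.snd ≫ p)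
      (d ≫ (biprod.inr : A' ⟶ B ⊞ A')⟦(1:ℤ)⟧') ⟶ T false :=
    { hom₁ := biprod.fst
      hom₂ := biprod.fst
      hom₃ := 0
      comm₁ := by
        change biprod.map (𝟙 B) f ≫ biprod.fst = biprod.fst ≫ 𝟙 B
        simp [T, contractibleTriangle]
      comm₂ := by
        open ZeroObject in change (biprod.snd ≫ p) ≫ (0 : Q ⟶ 0) = biprod.fst ≫ (0 : B ⟶ 0)
        simp [T, contractibleTriangle]
      comm₃ := by
        open ZeroObject in change (d ≫ (biprod.inr : A' ⟶ B ⊞ A')⟦(1:ℤ)⟧') ≫ (biprod.fst : B ⊞ A' ⟶ B)⟦(1:ℤ)⟧' = (0 : Q ⟶ 0) ≫ (0 : (0 : C) ⟶ B⟦(1:ℤ)⟧)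
        simp [T, contractibleTriangle, ← Functor.map_comp] }
  let φ := productTriangle.lift T
    (fun b => Bool.rec (motive := fun b => _ ⟶ T b) φ₂ φ₁ b)
  haveI h₁ : IsIso φ.hom₁ := by
    refine ⟨biprod.lift (Pi.π _ false) (Pi.π _ true), ?_, ?_⟩
    · apply biprod.hom_ext
      · erw [assoc, biprod.lift_fst, id_comp, Pi.lift_π]
      · erw [assoc, biprod.lift_snd, id_comp, Pi.lift_π]
    · apply limit.hom_ext
      rintro ⟨(_|_)⟩
      · erw [assoc, limit.lift_π, id_comp]; exact biprod.lift_fst _ _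
      · erw [assoc, limit.lift_π, id_comp]; exact biprod.lift_snd _ _
  haveI h₂ : IsIso φ.hom₂ := by
    refine ⟨biprod.lift (Pi.π _ false) (Pi.π _ true), ?_, ?_⟩
    · apply biprod.hom_ext
      · erw [assoc, biprod.lift_fst, id_comp, Pi.lift_π]
      · erw [assoc, biprod.lift_snd, id_comp, Pi.lift_π]
    · apply limit.hom_ext
      rintro ⟨(_|_)⟩
      · erw [assoc, limit.lift_π, id_comp]; exact biprod.lift_fst _ _
      · erw [assoc, limit.lift_π, id_comp]; exact biprod.lift_snd _ _
  haveI h₃ : IsIso φ.hom₃ := by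
    have hz : IsZero ((T false).obj₃) := by
      simp only [T, pairT_false, contractibleTriangle]
      exact isZero_zero C
    refine ⟨Pi.π _ true, ?_, ?_⟩
    · erw [Pi.lift_π]; rfl
    · apply limit.hom_ext
      rintro ⟨(_|_)⟩
      · exact hz.eq_of_tgt _ _
      · erw [assoc, limit.lift_π, id_comp]; exact comp_id _
  haveI : IsIso φ := Triangle.isIso_of_isIsos φ h₁ h₂ h₃
  exact isomorphic_distinguished _ hprod _ (asIso φ)

lemma dist_of_eq {A₁ A₂ B₁ B₂ Q : C} (f : A₁ ⟶ B₁) (p : B₁ ⟶ Q) (d : Q ⟶ A₁⟦(1:ℤ)⟧)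
    (h : Triangle.mk f p d ∈ distTriang C) (hA : A₁ = A₂) (hB : B₁ = B₂) :
    Triangle.mk (eqToHom hA.symm ≫ f ≫ eqToHom hB) (eqToHom hB.symm ≫ p)
      (d ≫ eqToHom (by rw [hA])) ∈ distTriang C := by
  subst hA; subst hB; simpa using h

/-- The number of indices `i` with `g i < k`. -/
def shuffleCount {n N : ℕ} (g : Fin n → Fin N) (k : ℕ) : Fin (n + 1) :=
  ⟨(Finset.univ.filter fun i => (g i : ℕ) < k).card,
    Nat.lt_succ_of_le ((Finset.card_filter_le _ _).trans (le_of_eq (by simp)))⟩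

lemma shuffleCount_zero {n N : ℕ} (g : Fin n → Fin N) : shuffleCount g 0 = 0 := by
  apply Fin.ext
  simp [shuffleCount]

lemma shuffleCount_top {n N : ℕ} (g : Fin n → Fin N) :
    shuffleCount g N = Fin.last n := by
  apply Fin.ext
  have h : (Finset.univ.filter fun i : Fin n => (g i : ℕ) < N) = Finset.univ :=
    Finset.filter_true_of_mem (fun i _ => (g i).isLt)
  simp [shuffleCount, h, Fin.last]

lemma shuffleCount_hit_castSucc {n N : ℕ} {g : Fin n → Fin N} (hg : StrictMono g)
    (i : Fin n) : shuffleCount g (g i : ℕ) = i.castSucc := by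
  apply Fin.ext
  have h : (Finset.univ.filter fun i' : Fin n => (g i' : ℕ) < (g i : ℕ)) = Finset.Iio i := by
    ext i'
    simp only [Finset.mem_filter, Finset.mem_univ, true_and, Finset.mem_Iio]
    rw [← Fin.lt_def, hg.lt_iff_lt]
  show (Finset.univ.filter fun i' : Fin n => (g i' : ℕ) < (g i : ℕ)).card = _
  rw [h, Fin.card_Iio, Fin.coe_castSucc]

lemma shuffleCount_hit_succ {n N : ℕ} {g : Fin n → Fin N} (hg : StrictMono g)
    (i : Fin n) : shuffleCount g ((g i : ℕ) + 1) = i.succ := by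
  apply Fin.ext
  have h : (Finset.univ.filter fun i' : Fin n => (g i' : ℕ) < (g i : ℕ) + 1)
      = Finset.Iic i := by
    ext i'
    simp only [Finset.mem_filter, Finset.mem_univ, true_and, Finset.mem_Iic, Nat.lt_succ_iff]
    rw [← Fin.le_def, hg.le_iff_le]
  show (Finset.univ.filter fun i' : Fin n => (g i' : ℕ) < (g i : ℕ) + 1).card = _
  rw [h, Fin.card_Iic, Fin.val_succ]

lemma shuffleCount_miss {n N : ℕ} (g : Fin n → Fin N) (k : ℕ)
    (h : ∀ i, (g i : ℕ) ≠ k) : shuffleCount g (k + 1) = shuffleCount g k := by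
  apply Fin.ext
  have he : (Finset.univ.filter fun i : Fin n => (g i : ℕ) < k + 1)
      = (Finset.univ.filter fun i : Fin n => (g i : ℕ) < k) := by
    apply Finset.filter_congr
    intro i _
    simp only [Nat.lt_succ_iff, eq_iff_iff]
    exact ⟨fun h' => lt_of_le_of_ne h' (h i), fun h' => h'.le⟩
  show (Finset.univ.filter fun i : Fin n => (g i : ℕ) < k + 1).card = _
  rw [he]
  rfl

end ShuffleAux

open ShuffleAux

/-- Shuffling two t-filtrations: given t-filtrations of `X` and `Y` with quotients
`(X_0, …, X_{n-1})` and `(Y_0, …, Y_{m-1})`, and any shuffle of the two sequences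
(an identification of the disjoint union of the index sets with `Fin (n + m)` which is
order-preserving on each of the two sequences), the direct sum `X ⊞ Y` admits a
t-filtration whose quotients form the shuffled sequence. -/
theorem shuffle_tFiltration [HasBinaryBiproducts C] {X Y : C} {n m : ℕ}
    (fX : TFiltration C X n) (fY : TFiltration C Y m)
    (e : (Fin n ⊕ Fin m) ≃ Fin (n + m))
    (heX : StrictMono fun i : Fin n => e (Sum.inl i))
    (heY : StrictMono fun j : Fin m => e (Sum.inr j)) :
    ∃ cf : TFiltration C (X ⊞ Y) (n + m),
      (∀ i : Fin n, Nonempty (cf.quot (e (Sum.inl i)) ≅ fX.quot i)) ∧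
      (∀ j : Fin m, Nonempty (cf.quot (e (Sum.inr j)) ≅ fY.quot j)) := by
  set gX : Fin n → Fin (n + m) := fun i => e (Sum.inl i) with hgX
  set gY : Fin m → Fin (n + m) := fun j => e (Sum.inr j) with hgY
  set aX : Fin (n + m + 1) → Fin (n + 1) := fun k => shuffleCount gX (k : ℕ) with haX
  set aY : Fin (n + m + 1) → Fin (m + 1) := fun k => shuffleCount gY (k : ℕ) with haY
  set F : Fin (n + m + 1) → C := fun k => fX.F (aX k) ⊞ fY.F (aY k) with hF
  have hX0 : aX 0 = 0 := shuffleCount_zero gX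
  have hY0 : aY 0 = 0 := shuffleCount_zero gY
  have hXlast : aX (Fin.last (n + m)) = Fin.last n := shuffleCount_top gX
  have hYlast : aY (Fin.last (n + m)) = Fin.last m := shuffleCount_top gY
  have isoTop : F 0 ≅ X ⊞ Y := by
    have h : F 0 = (fX.F 0 ⊞ fY.F 0) := by
      show (fX.F (aX 0) ⊞ fY.F (aY 0)) = _
      rw [hX0, hY0]
    rw [h]
    exact biprod.mapIso fX.isoTop fY.isoTop
  have isZeroBot : IsZero (F (Fin.last (n + m))) := by
    have h : F (Fin.last (n + m)) = (fX.F (Fin.last n) ⊞ fY.F (Fin.last m)) := by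
      show (fX.F (aX (Fin.last (n + m))) ⊞ fY.F (aY (Fin.last (n + m)))) = _
      rw [hXlast, hYlast]
    rw [h]
    exact (biprod_isZero_iff _ _).mpr ⟨fX.isZeroBot, fY.isZeroBot⟩
  have key : ∀ k : Fin (n + m), ∃ (Q : C) (f : F k.succ ⟶ F k.castSucc)
      (p : F k.castSucc ⟶ Q) (d : Q ⟶ (F k.succ)⟦(1:ℤ)⟧),
      (Triangle.mk f p d ∈ distTriang C) ∧
      (∀ i : Fin n, e (Sum.inl i) = k → Nonempty (Q ≅ fX.quot i)) ∧
      (∀ j : Fin m, e (Sum.inr j) = k → Nonempty (Q ≅ fY.quot j)) := by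
    intro k
    rcases hk : e.symm k with i | j
    · -- step comes from the `X` filtration
      have he : gX i = k := ((e.apply_symm_apply k).symm.trans (congrArg e hk)).symm
      have hc : aX k.castSucc = i.castSucc := by
        show shuffleCount gX ((k.castSucc : Fin (n + m + 1)) : ℕ) = i.castSucc
        rw [Fin.coe_castSucc, show (k : ℕ) = ((gX i : Fin (n + m)) : ℕ) from by rw [he]]
        exact shuffleCount_hit_castSucc heX i
      have hs : aX k.succ = i.succ := by
        show shuffleCount gX ((k.succ : Fin (n + m + 1)) : ℕ) = i.succ
        rw [Fin.val_succ, show (k : ℕ) = ((gX i : Fin (n + m)) : ℕ) from by rw [he]]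
        exact shuffleCount_hit_succ heX i
      have hYs : aY k.succ = aY k.castSucc := by
        show shuffleCount gY ((k.succ : Fin (n + m + 1)) : ℕ)
          = shuffleCount gY ((k.castSucc : Fin (n + m + 1)) : ℕ)
        rw [Fin.val_succ, Fin.coe_castSucc]
        apply shuffleCount_miss
        intro j hj
        exact absurd (e.injective ((Fin.ext hj : gY j = k).trans he.symm))
          (by simp)
      have hEs : F k.succ = (fX.F i.succ ⊞ fY.F (aY k.castSucc)) := by
        show (fX.F (aX k.succ) ⊞ fY.F (aY k.succ)) = _
        rw [hs, hYs]
      have hEc : F k.castSucc = (fX.F i.castSucc ⊞ fY.F (aY k.castSucc)) := by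
        show (fX.F (aX k.castSucc) ⊞ fY.F (aY k.castSucc)) = _
        rw [hc]
      refine ⟨fX.quot i, _, _, _,
        dist_of_eq _ _ _
          (sum_distTriang_left (fX.map i) (fX.π i) (fX.δ i) (fX.mem i)
            (fY.F (aY k.castSucc))) hEs.symm hEc.symm, ?_, ?_⟩
      · intro i' hi'
        have h2 : i' = i := by
          have := e.injective ((hi'.trans he.symm : e (Sum.inl i') = gX i))
          simpa using this
        subst h2
        exact ⟨Iso.refl _⟩
      · intro j hj
        exact absurd (e.injective ((hj.trans he.symm : e (Sum.inr j) = gX i)))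
          (by simp)
    · -- step comes from the `Y` filtration
      have he : gY j = k := ((e.apply_symm_apply k).symm.trans (congrArg e hk)).symm
      have hc : aY k.castSucc = j.castSucc := by
        show shuffleCount gY ((k.castSucc : Fin (n + m + 1)) : ℕ) = j.castSucc
        rw [Fin.coe_castSucc, show (k : ℕ) = ((gY j : Fin (n + m)) : ℕ) from by rw [he]]
        exact shuffleCount_hit_castSucc heY j
      have hs : aY k.succ = j.succ := by
        show shuffleCount gY ((k.succ : Fin (n + m + 1)) : ℕ) = j.succ
        rw [Fin.val_succ, show (k : ℕ) = ((gY j : Fin (n + m)) : ℕ) from by rw [he]]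
        exact shuffleCount_hit_succ heY j
      have hXs : aX k.succ = aX k.castSucc := by
        show shuffleCount gX ((k.succ : Fin (n + m + 1)) : ℕ)
          = shuffleCount gX ((k.castSucc : Fin (n + m + 1)) : ℕ)
        rw [Fin.val_succ, Fin.coe_castSucc]
        apply shuffleCount_miss
        intro i hi
        exact absurd (e.injective ((Fin.ext hi : gX i = k).trans he.symm))
          (by simp)
      have hEs : F k.succ = (fX.F (aX k.castSucc) ⊞ fY.F j.succ) := by
        show (fX.F (aX k.succ) ⊞ fY.F (aY k.succ)) = _
        rw [hs, hXs]
      have hEc : F k.castSucc = (fX.F (aX k.castSucc) ⊞ fY.F j.castSucc) := by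
        show (fX.F (aX k.castSucc) ⊞ fY.F (aY k.castSucc)) = _
        rw [hc]
      refine ⟨fY.quot j, _, _, _,
        dist_of_eq _ _ _
          (sum_distTriang_right (fY.map j) (fY.π j) (fY.δ j) (fY.mem j)
            (fX.F (aX k.castSucc))) hEs.symm hEc.symm, ?_, ?_⟩
      · intro i hi
        exact absurd (e.injective ((hi.trans he.symm : e (Sum.inl i) = gY j)))
          (by simp)
      · intro j' hj'
        have h2 : j' = j := by
          have := e.injective ((hj'.trans he.symm : e (Sum.inr j') = gY j))
          simpa using this
        subst h2
        exact ⟨Iso.refl _⟩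
  choose Q f p d hdist hQX hQY using key
  refine ⟨⟨F, isoTop, isZeroBot, Q, f, p, d, hdist⟩, ?_, ?_⟩
  · intro i
    exact hQX _ i rfl
  · intro j
    exact hQY _ j rfl
end

section
/- Let (Φ, {Π_φ}) be a t-stability on a triangulated category 𝒯 and let X be a semistable object of slope φ (i.e. X ∈ Π_φ, X ≠ 0). If X ≅ X¹ ⊕ X² ⊕ ⋯ ⊕ X^k with all X^i nonzero, then each direct summand X^i is semistable of slope φ, i.e. X^i ∈ Π_φ. -/
open CategoryTheory Category Limits Pretriangulated
universe v u
variable (C : Type u) [Category.{v} C] [HasZeroObject C] [HasShift C ℤ]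
  [Preadditive C] [∀ n : ℤ, (shiftFunctor C n).Additive] [Pretriangulated C]

variable {C}

/-- `homVanish` for unshifted morphisms. -/
lemma TStability.homVanishZero {Φ : Type} [LinearOrder Φ] (st : TStability C Φ)
    {ψ' φ' : Φ} (h : φ' < ψ') {A B : C} (hA : A ∈ st.P ψ') (hB : B ∈ st.P φ')
    (f : A ⟶ B) : f = 0 := by
  have h1 : f ≫ (shiftFunctorZero C ℤ).inv.app B = 0 :=
    st.homVanish h hA hB 0 le_rfl _
  have h2 : f = (f ≫ (shiftFunctorZero C ℤ).inv.app B) ≫ (shiftFunctorZero C ℤ).hom.app B := by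
    simp
  rw [h2, h1, zero_comp]

/-- A retract of a semistable object of slope `φ` is semistable of slope `φ`. -/
theorem TStability.retract_mem {Φ : Type} [LinearOrder Φ] (st : TStability C Φ) (φ : Φ)
    {X W : C} (hX : X ∈ st.P φ) (hW : ¬ IsZero W)
    (s : W ⟶ X) (r : X ⟶ W) (hsr : s ≫ r = 𝟙 W) : W ∈ st.P φ := by
  obtain ⟨n, filt, ψ, hmono, hq⟩ := st.HN W hW
  obtain _ | m := n
  · exact absurd (filt.isZeroBot.of_iso
      (filt.isoTop.symm ≪≫ eqToIso (congrArg filt.F (by decide : (0 : Fin 1) = Fin.last 0)))) hW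
  -- The top layer of the filtration is isomorphic to the top quotient.
  have hlastsucc : (Fin.last m).succ = Fin.last (m + 1) := by ext; simp
  have hz1 : IsZero ((Triangle.mk (filt.map (Fin.last m)) (filt.π (Fin.last m))
      (filt.δ (Fin.last m))).obj₁) := by
    show IsZero (filt.F ((Fin.last m).succ))
    rw [hlastsucc]
    exact filt.isZeroBot
  have hiso : IsIso (filt.π (Fin.last m)) :=
    (Triangle.isZero₁_iff_isIso₂ _ (filt.mem (Fin.last m))).1 hz1
  have hA' : filt.F ((Fin.last m).castSucc) ∈ st.P (ψ (Fin.last m)) :=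
    st.isoClosed _ (asIso (filt.π (Fin.last m))).symm (hq (Fin.last m)).1
  -- Claim A : the largest slope is at most φ
  have claimA : ψ (Fin.last m) ≤ φ := by
    by_contra hlt
    push_neg at hlt
    have key : ∀ j : Fin (m + 2), j.val ≤ m →
        ∀ g : filt.F ((Fin.last m).castSucc) ⟶ filt.F j, g = 0 := by
      intro j
      induction j using Fin.induction with
      | zero =>
        intro _ g
        have h1 : (g ≫ filt.isoTop.hom) ≫ s = 0 := st.homVanishZero hlt hA' hX _
        have h2 : g ≫ filt.isoTop.hom = 0 := by
          rw [← comp_id (g ≫ filt.isoTop.hom), ← hsr, ← assoc, h1, zero_comp]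
        calc g = (g ≫ filt.isoTop.hom) ≫ filt.isoTop.inv := by simp
          _ = 0 := by rw [h2, zero_comp]
      | succ i ih =>
        intro hj g
        have hi : i.val < m := by
          have := hj
          simp only [Fin.val_succ] at this
          omega
        have h0 : g ≫ filt.map i = 0 := by
          apply ih
          simp only [Fin.coe_castSucc]
          omega
        obtain ⟨h, hh⟩ := Triangle.coyoneda_exact₂ _
          (inv_rot_of_distTriang _ (filt.mem i)) g h0
        have hilt : i < Fin.last m := by
          rw [Fin.lt_def]
          simpa using hi
        have hzero : h = 0 :=
          st.homVanish (hmono hilt) hA' (hq i).1 (-1) (by omega) h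
        rw [hh, hzero]; exact zero_comp
    have hid : 𝟙 (filt.F ((Fin.last m).castSucc)) = 0 := key _ (by simp) _
    exact (hq (Fin.last m)).2
      (((IsZero.iff_id_eq_zero _).2 hid).of_iso (asIso (filt.π (Fin.last m))).symm)
  -- Claim B : the smallest slope is at least φ
  have claimB : φ ≤ ψ 0 := by
    by_contra hlt
    push_neg at hlt
    have hq0 := (hq 0).1
    have hWq : ∀ g : W ⟶ filt.quot 0, g = 0 := by
      intro g
      have h1 : r ≫ g = 0 := st.homVanishZero hlt hX hq0 _
      rw [← id_comp g, ← hsr, assoc, h1, comp_zero]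
    have e0 : (0 : Fin (m + 1)).castSucc = (0 : Fin (m + 2)) := by ext; simp
    have hπ0 : filt.π 0 = 0 := by
      have h1 : filt.isoTop.inv ≫ eqToHom (congrArg filt.F e0.symm) ≫ filt.π 0 = 0 := hWq _
      calc filt.π 0
          = eqToHom (congrArg filt.F e0) ≫ filt.isoTop.hom ≫
            (filt.isoTop.inv ≫ eqToHom (congrArg filt.F e0.symm) ≫ filt.π 0) := by
              simp only [Iso.hom_inv_id_assoc, eqToHom_trans_assoc, eqToHom_refl, id_comp]
        _ = 0 := by rw [h1, comp_zero, comp_zero]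
    obtain ⟨v, hv⟩ := Triangle.yoneda_exact₂ _ (rot_of_distTriang _ (filt.mem 0))
      (𝟙 (filt.quot 0)) (by exact (comp_id _).trans hπ0)
    have key : ∀ j : Fin (m + 2), 1 ≤ j.val →
        ∀ g : (filt.F j)⟦(1 : ℤ)⟧ ⟶ filt.quot 0, g = 0 := by
      intro j
      induction j using Fin.reverseInduction with
      | last =>
        intro _ g
        exact ((shiftFunctor C (1 : ℤ)).map_isZero filt.isZeroBot).eq_of_src g 0
      | cast i ih =>
        intro hj g
        simp only [Fin.coe_castSucc] at hj
        have hi0 : (0 : Fin (m + 1)) < i := by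
          rw [Fin.lt_def]
          simp only [Fin.val_zero]; omega
        have hTS : (Triangle.shiftFunctor C (1 : ℤ)).obj
            (Triangle.mk (filt.map i) (filt.π i) (filt.δ i)) ∈ distTriang C :=
          Triangle.shift_distinguished _ (filt.mem i) (1 : ℤ)
        have h1 : ((Triangle.shiftFunctor C (1 : ℤ)).obj
            (Triangle.mk (filt.map i) (filt.π i) (filt.δ i))).mor₁ ≫ g = 0 := by
          apply ih
          simp
        obtain ⟨g', hg'⟩ := Triangle.yoneda_exact₂ _ hTS g h1
        have hg'0 : g' = 0 :=
          st.homVanishZero (lt_of_lt_of_le (hmono hi0) (st.τ_le _))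
            (st.shiftP _ _ (hq i).1) hq0 g'
        rw [hg', hg'0]; exact comp_zero
    have hv0 : v = 0 := key ((0 : Fin (m + 1)).succ) (by simp) v
    have hid : 𝟙 (filt.quot 0) = 0 := by rw [hv, hv0]; exact comp_zero
    exact (hq 0).2 ((IsZero.iff_id_eq_zero _).2 hid)
  -- conclude that the filtration has length one and slope φ
  have hm0 : m = 0 := by
    by_contra hm
    have hlast : (0 : Fin (m + 1)) < Fin.last m := by
      rw [Fin.lt_def]
      simp only [Fin.val_zero, Fin.val_last]
      omega
    exact absurd (lt_of_lt_of_le (hmono hlast) claimA) (not_lt.2 claimB)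
  subst hm0
  have hlast0 : Fin.last 0 = (0 : Fin 1) := by decide
  rw [hlast0] at claimA
  have hψφ : ψ 0 = φ := le_antisymm claimA claimB
  have hsucc0 : (0 : Fin 1).succ = Fin.last 1 := by decide
  have hz2 : IsZero ((Triangle.mk (filt.map 0) (filt.π 0) (filt.δ 0)).obj₁) := by
    show IsZero (filt.F ((0 : Fin 1).succ))
    rw [hsucc0]
    exact filt.isZeroBot
  have hiso0 : IsIso (filt.π 0) := (Triangle.isZero₁_iff_isIso₂ _ (filt.mem 0)).1 hz2
  have e0 : (0 : Fin 1).castSucc = (0 : Fin 2) := by decide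
  exact st.isoClosed φ
    ((asIso (filt.π 0)).symm ≪≫ eqToIso (congrArg filt.F e0) ≪≫ filt.isoTop)
    (hψφ ▸ (hq 0).1)

/-- A direct summand of a semistable object of slope `φ` is semistable of slope `φ`. -/
theorem summand_semistable_of_semistable [HasFiniteBiproducts C]
    {Φ : Type} [LinearOrder Φ] (st : TStability C Φ) (φ : Φ)
    (X : C) (hX : X ∈ st.P φ) (hX0 : ¬ IsZero X)
    (k : ℕ) (Y : Fin k → C) (hY : ∀ i, ¬ IsZero (Y i)) (e : X ≅ ⨁ Y) :
    ∀ i, Y i ∈ st.P φ := by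
  intro i
  refine st.retract_mem φ hX (hY i) (biproduct.ι Y i ≫ e.inv) (e.hom ≫ biproduct.π Y i) ?_
  simp
end
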